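/- arXiv:1707.04319 — 5 statements merged into one kernel-verified Lean document; each statement's English description precedes it below -/
import Mathlib

section
/- Let w_1,...,w_P ∈ ℝ with P ≥ 1. Define E(a, θ) = Σ_{i=1}^P (w_i - a θ_i)^2 for a ∈ ℝ and θ ∈ {-1,+1}^P. Then the pair a* = (1/P) Σ_{i=1}^P |w_i| and θ*_i = sgn(w_i) minimizes E over all a ∈ ℝ and θ ∈ {-1,+1}^P. -/
open Finset in
/-- Binarization with scale: `a* = (1/P) Σ |w i|` and `θ* i = sgn (w i)` minimize
`E(a,θ) = Σ (w i - a θ i)^2` over `a ∈ ℝ` and `θ ∈ {-1,+1}^P`. -/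
theorem stmt_3 (P : ℕ) (hP : 0 < P) (w : Fin P → ℝ) :
    ∀ (a : ℝ) (θ : Fin P → ℝ), (∀ i, θ i = -1 ∨ θ i = 1) →
      (∑ i, (w i - ((∑ i, |w i|) / P) * (if w i < 0 then (-1 : ℝ) else 1))^2)
        ≤ ∑ i, (w i - a * θ i)^2 := by
  intro a θ hθ
  have hP' : (0:ℝ) < P := by exact_mod_cast hP
  set S : ℝ := ∑ i, |w i| with hS
  set T : ℝ := ∑ i, w i * θ i with hT
  have hTleS : T ≤ S := by
    apply Finset.sum_le_sum
    intro i _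
    rcases hθ i with h | h <;> rw [h]
    · simpa using neg_le_abs (w i)
    · simpa using le_abs_self (w i)
  have hnegS : -S ≤ T := by
    rw [hS, hT, ← Finset.sum_neg_distrib]
    apply Finset.sum_le_sum
    intro i _
    rcases hθ i with h | h <;> rw [h]
    · simpa using le_abs_self (w i)
    · simpa using neg_abs_le (w i)
  have hT2 : T ^ 2 ≤ S ^ 2 := sq_le_sq' hnegS hTleS
  have hLHS : (∑ i, (w i - (S / P) * (if w i < 0 then (-1:ℝ) else 1))^2)
      = (∑ i, (w i)^2) - 2 * (S / P) * S + P * (S / P)^2 := by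
    have : ∀ i ∈ Finset.univ, (w i - (S / P) * (if w i < 0 then (-1:ℝ) else 1))^2
        = (w i)^2 - 2 * (S / P) * |w i| + (S / P)^2 := by
      intro i _
      by_cases h : w i < 0
      · rw [if_pos h, abs_of_neg h]; ring
      · rw [if_neg h, abs_of_nonneg (not_lt.1 h)]; ring
    rw [Finset.sum_congr rfl this]
    rw [Finset.sum_add_distrib, Finset.sum_sub_distrib, ← Finset.mul_sum, ← hS]
    simp [Finset.card_univ]
  have hRHS : (∑ i, (w i - a * θ i)^2)
      = (∑ i, (w i)^2) - 2 * a * T + P * a^2 := by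
    have : ∀ i ∈ Finset.univ, (w i - a * θ i)^2
        = (w i)^2 - 2 * a * (w i * θ i) + a^2 := by
      intro i _
      rcases hθ i with h | h <;> rw [h] <;> ring
    rw [Finset.sum_congr rfl this]
    rw [Finset.sum_add_distrib, Finset.sum_sub_distrib, ← Finset.mul_sum, ← hT]
    simp [Finset.card_univ]
  rw [hLHS, hRHS]
  have key : 2 * a * T - P * a^2 ≤ S^2 / P := by
    rw [le_div_iff₀ hP']
    nlinarith [sq_nonneg (a * P - T)]
  have hSP : 2 * (S / P) * S - P * (S / P)^2 = S^2 / P := by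
    field_simp; ring
  nlinarith [key, hSP]
end

section
/- Let w_1,...,w_P ∈ ℝ with |w_1| ≥ |w_2| ≥ ... ≥ |w_P| and a_j = (1/j) Σ_{i=1}^j |w_i|. If j* maximizes √j · a_j over j ∈ {1,...,P}, then |w_{j*}| > (1/2) a_{j*} provided a_{j*} > 0. -/
open Finset in
/-- Weights sorted by decreasing magnitude (0-based indexing); `a j` is the average
magnitude of the top `j` weights. If `jstar` maximizes `√j · a j` over
`j ∈ {1,…,P}` and `a jstar > 0`, then the `jstar`-th weight (1-based), i.e.
`w (jstar - 1)` here, satisfies `|w (jstar - 1)| > a jstar / 2`. -/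
theorem stmt_9 (P : ℕ) (w : ℕ → ℝ)
    (hsort : ∀ i j : ℕ, i ≤ j → j < P → |w j| ≤ |w i|)
    (a : ℕ → ℝ) (ha : ∀ j : ℕ, a j = (∑ i ∈ Finset.range j, |w i|) / j)
    (jstar : ℕ) (h1 : 1 ≤ jstar) (h2 : jstar ≤ P)
    (hmax : ∀ j : ℕ, 1 ≤ j → j ≤ P →
      Real.sqrt j * a j ≤ Real.sqrt jstar * a jstar)
    (hpos : 0 < a jstar) :
    |w (jstar - 1)| > a jstar / 2 := by
  obtain ⟨m, rfl⟩ : ∃ m, jstar = m + 1 := ⟨jstar - 1, (Nat.succ_pred_eq_of_pos h1).symm⟩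
  simp only [Nat.add_sub_cancel]
  rcases Nat.eq_zero_or_pos m with rfl | hm
  · have : a 1 = |w 0| := by simp [ha 1]
    rw [this] at hpos ⊢
    linarith
  · set S := ∑ i ∈ Finset.range (m + 1), |w i| with hS
    set Sp := ∑ i ∈ Finset.range m, |w i| with hSp
    have hsplit : S = Sp + |w m| := Finset.sum_range_succ _ _
    set u := Real.sqrt (m + 1 : ℕ) with hu
    set v := Real.sqrt (m : ℕ) with hv
    have hu2 : u ^ 2 = (m + 1 : ℕ) := Real.sq_sqrt (by positivity)
    have hv2 : v ^ 2 = (m : ℕ) := Real.sq_sqrt (by positivity)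
    have hupos : 0 < u := Real.sqrt_pos.mpr (by positivity)
    have hvpos : 0 < v := Real.sqrt_pos.mpr (by exact_mod_cast hm)
    have huv : v < u := by
      apply Real.sqrt_lt_sqrt (by positivity)
      exact_mod_cast Nat.lt_succ_self m
    have hkey := hmax m hm (le_trans (Nat.le_succ m) h2)
    rw [ha m, ha (m + 1)] at hkey
    have hapos : 0 < S := by
      rw [ha (m + 1)] at hpos
      have : (0 : ℝ) < (m + 1 : ℕ) := by positivity
      exact (div_pos_iff.mp hpos).resolve_right (by push_neg; intro h; linarith) |>.1
    have haj : a (m + 1) = S / (m + 1 : ℕ) := ha (m + 1)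
    rw [haj]
    have hm1 : ((m : ℝ)) = v ^ 2 := hv2.symm
    have hm2 : ((m + 1 : ℕ) : ℝ) = u ^ 2 := hu2.symm
    rw [hm1, hm2] at hkey
    rw [hm2]
    have hx : 0 ≤ |w m| := abs_nonneg _
    -- hkey : v * (Sp / v^2) ≤ u * (S / u^2)
    have hvv : Real.sqrt (v ^ 2) = v := Real.sqrt_sq hvpos.le
    rw [hvv] at hkey
    have h1' : v * (Sp / v ^ 2) = Sp / v := by field_simp
    have h2' : u * (S / u ^ 2) = S / u := by field_simp
    rw [show (∑ i ∈ Finset.range m, |w i|) = Sp from rfl,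
        show (∑ i ∈ Finset.range (m+1), |w i|) = S from rfl, h1', h2'] at hkey
    have hkey' : u * (S - |w m|) ≤ v * S := by
      have := (div_le_div_iff₀ hvpos hupos).mp hkey
      nlinarith [hsplit]
    have huv1 : u ^ 2 = v ^ 2 + 1 := by rw [hu2, hv2]; push_cast; ring
    rw [gt_iff_lt, div_div, div_lt_iff₀ (by positivity)]
    nlinarith [mul_le_mul_of_nonneg_left hkey' (by positivity : (0:ℝ) ≤ 2*u),
      mul_pos (mul_pos (sub_pos.mpr huv) (sub_pos.mpr huv)) hapos]
end

section
/- Let w_1,...,w_P ∈ ℝ with |w_1| ≥ ... ≥ |w_P|. Let j* = argmax_{1≤j≤P} (1/√j) Σ_{i=1}^j |w_i|, a* = (1/j*) Σ_{i=1}^{j*} |w_i|, and θ*_i = 0 if |w_i| < a*/2 and θ*_i = sgn(w_i) otherwise. Then (a*, θ*) minimizes E(a,θ) = Σ_{i=1}^P (w_i - a θ_i)^2 over all a ∈ ℝ and θ ∈ {-1,0,+1}^P. -/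
open Finset

/-- Sum of `|w|` over any `k`-subset of `range P` is at most the top-`k` sum. -/
lemma topk_sum (P k : ℕ) (w : ℕ → ℝ)
    (hsort : ∀ i j : ℕ, i ≤ j → j < P → |w j| ≤ |w i|)
    (A : Finset ℕ) (hA : A ⊆ Finset.range P) (hk : A.card = k) :
    ∑ i ∈ A, |w i| ≤ ∑ i ∈ Finset.range k, |w i| := by
  rcases Nat.eq_zero_or_pos k with h0 | hpos
  · subst h0
    have : A = ∅ := Finset.card_eq_zero.mp hk
    simp [this]
  · have hkP : k ≤ P := by
      rw [← hk]; simpa using Finset.card_le_card hA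
    have hk1P : k - 1 < P := by omega
    have hcard : (A \ Finset.range k).card = (Finset.range k \ A).card := by
      have e1 := Finset.card_sdiff_add_card_inter A (Finset.range k)
      have e2 := Finset.card_sdiff_add_card_inter (Finset.range k) A
      rw [Finset.inter_comm] at e2
      simp only [Finset.card_range] at e2
      omega
    have hub : ∑ i ∈ A \ Finset.range k, |w i| ≤ (A \ Finset.range k).card • |w (k-1)| := by
      apply Finset.sum_le_card_nsmul
      intro i hi
      rw [Finset.mem_sdiff, Finset.mem_range] at hi
      exact hsort (k-1) i (by omega) (Finset.mem_range.mp (hA hi.1))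
    have hlb : (Finset.range k \ A).card • |w (k-1)| ≤ ∑ i ∈ Finset.range k \ A, |w i| := by
      apply Finset.card_nsmul_le_sum
      intro i hi
      rw [Finset.mem_sdiff, Finset.mem_range] at hi
      exact hsort i (k-1) (by omega) hk1P
    have hs1 : ∑ i ∈ A ∩ Finset.range k, |w i| + ∑ i ∈ A \ Finset.range k, |w i|
        = ∑ i ∈ A, |w i| := Finset.sum_inter_add_sum_sdiff A (Finset.range k) _
    have hs2 : ∑ i ∈ Finset.range k ∩ A, |w i| + ∑ i ∈ Finset.range k \ A, |w i|
        = ∑ i ∈ Finset.range k, |w i| := Finset.sum_inter_add_sum_sdiff (Finset.range k) A _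
    rw [Finset.inter_comm] at hs2
    rw [hcard] at hub
    rw [nsmul_eq_mul] at hub hlb
    linarith

lemma sq_div_mono (x y : ℝ) (hx : 0 ≤ x) (j k : ℕ) (hj : 1 ≤ j) (hk : 1 ≤ k)
    (h : x / Real.sqrt k ≤ y / Real.sqrt j) :
    x ^ 2 / (k : ℝ) ≤ y ^ 2 / (j : ℝ) := by
  have hkx : x ^ 2 / (k : ℝ) = (x / Real.sqrt k) ^ 2 := by
    rw [div_pow, Real.sq_sqrt (by positivity)]
  have hjy : y ^ 2 / (j : ℝ) = (y / Real.sqrt j) ^ 2 := by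
    rw [div_pow, Real.sq_sqrt (by positivity)]
  rw [hkx, hjy]
  have h0 : 0 ≤ x / Real.sqrt k := by positivity
  exact pow_le_pow_left₀ h0 h 2

open Finset in
/-- Ternarization with adaptive scale: with weights sorted by decreasing magnitude
(0-based indexing), `jstar = argmax_{1≤j≤P} (1/√j) Σ_{i<j} |w i|`,
`astar = (1/jstar) Σ_{i<jstar} |w i|`, and `θstar i = 0` if `|w i| < astar/2`
and `sgn (w i)` otherwise, the pair `(astar, θstar)` minimizes
`E(a,θ) = Σ_{i<P} (w i - a θ i)^2` over `a ∈ ℝ`, `θ ∈ {-1,0,+1}^P`. -/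
theorem stmt_10 (P : ℕ) (hP : 0 < P) (w : ℕ → ℝ)
    (hsort : ∀ i j : ℕ, i ≤ j → j < P → |w j| ≤ |w i|)
    (jstar : ℕ) (h1 : 1 ≤ jstar) (h2 : jstar ≤ P)
    (hmax : ∀ j : ℕ, 1 ≤ j → j ≤ P →
      (∑ i ∈ Finset.range j, |w i|) / Real.sqrt j
        ≤ (∑ i ∈ Finset.range jstar, |w i|) / Real.sqrt jstar) :
    let astar : ℝ := (∑ i ∈ Finset.range jstar, |w i|) / jstar
    let θstar : ℕ → ℝ := fun i =>
      if |w i| < astar / 2 then 0 else (if w i < 0 then -1 else 1)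
    ∀ (a : ℝ) (θ : ℕ → ℝ), (∀ i < P, θ i = -1 ∨ θ i = 0 ∨ θ i = 1) →
      (∑ i ∈ Finset.range P, (w i - astar * θstar i)^2)
        ≤ ∑ i ∈ Finset.range P, (w i - a * θ i)^2 := by
  intro astar θstar a θ hθ
  set S : ℝ := ∑ i ∈ Finset.range jstar, |w i| with hSdef
  have hS0 : 0 ≤ S := Finset.sum_nonneg fun i _ => abs_nonneg _
  have hjpos : (0:ℝ) < (jstar : ℝ) := by exact_mod_cast h1
  have hastar0 : 0 ≤ astar := div_nonneg hS0 (le_of_lt hjpos)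
  -- the common middle quantity
  set Q : ℝ := S ^ 2 / (jstar : ℝ) with hQdef
  have hQ0 : 0 ≤ Q := by positivity
  -- Step 1 : E(astar, θstar) ≤ ∑ w² - Q
  have step1 : (∑ i ∈ Finset.range P, (w i - astar * θstar i)^2)
      ≤ (∑ i ∈ Finset.range P, (w i)^2) - Q := by
    set g : ℕ → ℝ := fun i => if |w i| < astar / 2 then 0 else 2*astar*|w i| - astar^2 with hgdef
    have hterm : ∀ i, (w i - astar * θstar i)^2 = (w i)^2 - g i := by
      intro i
      simp only [hgdef, θstar]
      by_cases h : |w i| < astar / 2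
      · simp [h]
      · simp only [h, if_false]
        by_cases hw : w i < 0
        · have : |w i| = -(w i) := abs_of_neg hw
          simp [hw, this]; ring
        · have : |w i| = w i := abs_of_nonneg (le_of_not_gt hw)
          simp [hw, this]; ring
    have hg_nonneg : ∀ i, 0 ≤ g i := by
      intro i
      simp only [hgdef]
      by_cases h : |w i| < astar / 2
      · simp [h]
      · simp only [h, if_false]
        push_neg at h
        nlinarith
    have hg_ge : ∀ i, 2*astar*|w i| - astar^2 ≤ g i := by
      intro i
      simp only [hgdef]
      by_cases h : |w i| < astar / 2
      · simp only [h, if_true]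
        nlinarith
      · simp [h]
    have hsum : ∑ i ∈ Finset.range P, (w i - astar * θstar i)^2
        = (∑ i ∈ Finset.range P, (w i)^2) - ∑ i ∈ Finset.range P, g i := by
      rw [← Finset.sum_sub_distrib]
      exact Finset.sum_congr rfl fun i _ => hterm i
    rw [hsum]
    have hsub : ∑ i ∈ Finset.range jstar, g i ≤ ∑ i ∈ Finset.range P, g i :=
      Finset.sum_le_sum_of_subset_of_nonneg
        (Finset.range_subset_range.mpr h2) (fun i _ _ => hg_nonneg i)
    have hlow : Q ≤ ∑ i ∈ Finset.range jstar, g i := by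
      have h3 : ∑ i ∈ Finset.range jstar, (2*astar*|w i| - astar^2)
          ≤ ∑ i ∈ Finset.range jstar, g i :=
        Finset.sum_le_sum fun i _ => hg_ge i
      have h4 : ∑ i ∈ Finset.range jstar, (2*astar*|w i| - astar^2)
          = 2*astar*S - (jstar : ℝ) * astar^2 := by
        rw [Finset.sum_sub_distrib, ← Finset.mul_sum, Finset.sum_const, Finset.card_range,
          nsmul_eq_mul]
      have h5 : 2*astar*S - (jstar : ℝ) * astar^2 = Q := by
        have : astar = S / (jstar : ℝ) := rfl
        rw [this, hQdef]
        field_simp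
        ring
      linarith
    linarith
  -- Step 2 : ∑ w² - Q ≤ E(a, θ)
  have step2 : (∑ i ∈ Finset.range P, (w i)^2) - Q
      ≤ ∑ i ∈ Finset.range P, (w i - a * θ i)^2 := by
    set A : Finset ℕ := (Finset.range P).filter (fun i => θ i ≠ 0) with hAdef
    set k : ℕ := A.card with hkdef
    have hAsub : A ⊆ Finset.range P := Finset.filter_subset _ _
    have hterm : ∀ i ∈ Finset.range P,
        (w i)^2 - (2 * |a| * |w i| - a^2) * (θ i)^2 ≤ (w i - a * θ i)^2 := by
      intro i hi
      rcases hθ i (Finset.mem_range.mp hi) with h | h | h <;> rw [h] <;>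
        nlinarith [neg_abs_le (a * w i), le_abs_self (a * w i), abs_mul a (w i)]
    have hsq : ∀ i ∈ Finset.range P, (θ i)^2 = if θ i = 0 then 0 else 1 := by
      intro i hi
      rcases hθ i (Finset.mem_range.mp hi) with h | h | h <;> simp [h]
    set T : ℝ := ∑ i ∈ A, |w i| with hTdef
    have hT0 : 0 ≤ T := Finset.sum_nonneg fun i _ => abs_nonneg _
    have hTsum : ∑ i ∈ Finset.range P, |w i| * (θ i)^2 = T := by
      rw [hTdef, hAdef, Finset.sum_filter]
      apply Finset.sum_congr rfl
      intro i hi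
      rw [hsq i hi]
      by_cases h : θ i = 0 <;> simp [h]
    have hKsum : ∑ i ∈ Finset.range P, (θ i)^2 = (k : ℝ) := by
      rw [hkdef, hAdef, Finset.card_filter]
      push_cast
      apply Finset.sum_congr rfl
      intro i hi
      rw [hsq i hi]
      by_cases h : θ i = 0 <;> simp [h]
    have hEsum : (∑ i ∈ Finset.range P, (w i)^2) - (2 * |a| * T - a^2 * (k:ℝ))
        ≤ ∑ i ∈ Finset.range P, (w i - a * θ i)^2 := by
      have := Finset.sum_le_sum hterm
      have hexp : ∑ i ∈ Finset.range P, ((w i)^2 - (2 * |a| * |w i| - a^2) * (θ i)^2)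
          = (∑ i ∈ Finset.range P, (w i)^2) - (2 * |a| * T - a^2 * (k:ℝ)) := by
        rw [Finset.sum_sub_distrib]
        congr 1
        have hx : ∑ i ∈ Finset.range P, (2 * |a| * |w i| - a^2) * (θ i)^2
            = 2 * |a| * (∑ i ∈ Finset.range P, |w i| * (θ i)^2)
              - a^2 * (∑ i ∈ Finset.range P, (θ i)^2) := by
          rw [Finset.mul_sum, Finset.mul_sum, ← Finset.sum_sub_distrib]
          exact Finset.sum_congr rfl fun i _ => by ring
        rw [hx, hTsum, hKsum]
      linarith [hexp ▸ this]
    have hkey : 2 * |a| * T - a^2 * (k:ℝ) ≤ Q := by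
      rcases Nat.eq_zero_or_pos k with h0 | hkpos
      · have hA0 : A = ∅ := Finset.card_eq_zero.mp (hkdef ▸ h0)
        have hT0' : T = 0 := by rw [hTdef, hA0]; simp
        rw [h0, hT0']
        simpa using hQ0
      · have hkP : k ≤ P := by
          rw [hkdef]
          calc A.card ≤ (Finset.range P).card := Finset.card_le_card hAsub
            _ = P := Finset.card_range P
        have hkr : (0:ℝ) < (k:ℝ) := by exact_mod_cast hkpos
        have hTle : T ≤ ∑ i ∈ Finset.range k, |w i| :=
          topk_sum P k w hsort A hAsub hkdef.symm
        have hSk0 : 0 ≤ ∑ i ∈ Finset.range k, |w i| :=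
          Finset.sum_nonneg fun i _ => abs_nonneg _
        have hQk : (∑ i ∈ Finset.range k, |w i|)^2 / (k:ℝ) ≤ Q :=
          sq_div_mono _ S hSk0 jstar k h1 hkpos (hmax k hkpos hkP)
        have hT2 : T^2 / (k:ℝ) ≤ (∑ i ∈ Finset.range k, |w i|)^2 / (k:ℝ) := by
          exact (div_le_div_iff_of_pos_right hkr).mpr (pow_le_pow_left₀ hT0 hTle 2)
        have hcs : 2 * |a| * T - a^2 * (k:ℝ) ≤ T^2 / (k:ℝ) := by
          rw [le_div_iff₀ hkr, ← sq_abs a]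
          nlinarith [sq_nonneg (|a| * (k:ℝ) - T)]
        linarith
    linarith [hEsum, hkey]
  linarith
end

section
/- Let w > 0, C ≥ 0 an integer, and f = -log₂ w. Define α by: α = 0 if f > C+1; α = 1 if f ≤ 0; α = 2^{-C} if C < f ≤ C+1; and α = 2^{-⌊f + log₂(3/2)⌋} otherwise. Then α minimizes (w - θ)^2 over θ ∈ {0, 1, 2^{-1}, ..., 2^{-C}}. -/
private lemma sq_key {w a t : ℝ}
    (h : (t ≤ a ∧ t ≤ 2*w - a) ∨ (a ≤ t ∧ 2*w - a ≤ t)) :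
    (w - a)^2 ≤ (w - t)^2 := by
  rcases h with ⟨h1, h2⟩ | ⟨h1, h2⟩ <;> nlinarith

/-- Powers-of-two quantization (positive case): for `w > 0`, `C ≥ 0` integer and
`f = -log₂ w`, the value `α` given by the stated piecewise formula minimizes
`(w - θ)^2` over the codebook `{0, 1, 2⁻¹, …, 2^{-C}}`. -/
theorem stmt_12 (w : ℝ) (hw : 0 < w) (C : ℕ) :
    let f : ℝ := -Real.logb 2 w
    let α : ℝ :=
      if f > (C : ℝ) + 1 then 0
      else if f ≤ 0 then 1
      else if (C : ℝ) < f then (2 : ℝ) ^ (-(C : ℝ))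
      else (2 : ℝ) ^ (-((⌊f + Real.logb 2 (3/2)⌋ : ℤ) : ℝ))
    ∀ θ : ℝ, (θ = 0 ∨ ∃ k : ℕ, k ≤ C ∧ θ = (2 : ℝ) ^ (-(k : ℝ))) →
      (w - α)^2 ≤ (w - θ)^2 := by
  intro f α θ hθ
  have h2 : (1:ℝ) < 2 := one_lt_two
  have h2p : (0:ℝ) < 2 := two_pos
  have hf : f = -Real.logb 2 w := rfl
  have hw2 : (2:ℝ) ^ (-f) = w := by
    rw [hf, neg_neg]
    exact Real.rpow_logb h2p (by norm_num) hw
  have mono : ∀ x y : ℝ, x ≤ y → (2:ℝ)^x ≤ (2:ℝ)^y := fun x y h =>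
    (Real.rpow_le_rpow_left_iff h2).mpr h
  have smono : ∀ x y : ℝ, x < y → (2:ℝ)^x < (2:ℝ)^y := fun x y h =>
    (Real.rpow_lt_rpow_left_iff h2).mpr h
  have hα : α = (if f > (C : ℝ) + 1 then (0:ℝ)
      else if f ≤ 0 then 1
      else if (C : ℝ) < f then (2 : ℝ) ^ (-(C : ℝ))
      else (2 : ℝ) ^ (-((⌊f + Real.logb 2 (3/2)⌋ : ℤ) : ℝ))) := rfl
  apply sq_key
  split_ifs at hα with h1 hle h3
  · -- f > C + 1 : α = 0
    rw [hα]
    rcases hθ with rfl | ⟨k, hk, rfl⟩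
    · left; constructor <;> linarith
    · right
      have hkC : (k:ℝ) ≤ C := Nat.cast_le.mpr hk
      have hw' : w < (2:ℝ)^(-(C:ℝ)-1) := by
        rw [← hw2]; exact smono _ _ (by linarith)
      have hstep : (2:ℝ)^(-(C:ℝ)-1) * 2 ≤ (2:ℝ)^(-(k:ℝ)) := by
        have := mono (-(C:ℝ)-1+1) (-(k:ℝ)) (by linarith)
        rwa [Real.rpow_add h2p, Real.rpow_one] at this
      constructor
      · positivity
      · nlinarith
  · -- f ≤ 0 : α = 1
    rw [hα]
    have hw1 : (1:ℝ) ≤ w := by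
      rw [← hw2]
      calc (1:ℝ) = (2:ℝ)^(0:ℝ) := (Real.rpow_zero 2).symm
        _ ≤ (2:ℝ)^(-f) := mono _ _ (by linarith)
    rcases hθ with rfl | ⟨k, hk, rfl⟩
    · left; constructor <;> linarith
    · left
      have : (2:ℝ)^(-(k:ℝ)) ≤ 1 := by
        calc (2:ℝ)^(-(k:ℝ)) ≤ (2:ℝ)^(0:ℝ) := mono _ _ (neg_nonpos.mpr (Nat.cast_nonneg k))
          _ = 1 := Real.rpow_zero 2
      constructor <;> linarith
  · -- C < f ≤ C + 1 : α = 2^{-C}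
    rw [hα]
    have hC1 : (2:ℝ)^(-(C:ℝ)-1) * 2 = (2:ℝ)^(-(C:ℝ)) := by
      have h := Real.rpow_add h2p (-(C:ℝ)-1) 1
      rw [Real.rpow_one] at h
      rw [← h]; norm_num
    have hlo : (2:ℝ)^(-(C:ℝ)-1) ≤ w := by
      rw [← hw2]; exact mono _ _ (by linarith)
    have hhi : w < (2:ℝ)^(-(C:ℝ)) := by
      rw [← hw2]; exact smono _ _ (by linarith)
    rcases hθ with rfl | ⟨k, hk, rfl⟩
    · left
      constructor
      · positivity
      · nlinarith
    · right
      have : (2:ℝ)^(-(C:ℝ)) ≤ (2:ℝ)^(-(k:ℝ)) :=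
        mono _ _ (by have : (k:ℝ) ≤ C := Nat.cast_le.mpr hk; linarith)
      constructor
      · exact this
      · linarith
  · -- main case : α = 2^{-⌊f + log₂(3/2)⌋}
    rw [hα]
    set m : ℤ := ⌊f + Real.logb 2 (3/2)⌋ with hm
    set P : ℝ := (2:ℝ)^(-(m:ℝ)) with hP
    have hPpos : 0 < P := Real.rpow_pos_of_pos h2p _
    have hg : (2:ℝ) ^ (Real.logb 2 (3/2)) = 3/2 :=
      Real.rpow_logb h2p (by norm_num) (by norm_num)
    -- w ≤ (3/2) P
    have hwu : w ≤ 3/2 * P := by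
      have hfl : (m:ℝ) ≤ f + Real.logb 2 (3/2) := Int.floor_le _
      have : (2:ℝ)^(-f) ≤ (2:ℝ)^(Real.logb 2 (3/2) + -(m:ℝ)) :=
        mono _ _ (by linarith)
      rw [hw2, Real.rpow_add h2p, hg] at this
      linarith
    -- (3/4) P < w
    have hwl : 3/4 * P < w := by
      have hfl : f + Real.logb 2 (3/2) < (m:ℝ) + 1 := Int.lt_floor_add_one _
      have h1' : (2:ℝ)^(Real.logb 2 (3/2) + (-(m:ℝ) + -1)) < (2:ℝ)^(-f) :=
        smono _ _ (by linarith)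
      rw [hw2, Real.rpow_add h2p, hg, Real.rpow_add h2p,
        Real.rpow_neg_one] at h1'
      linarith
    rcases hθ with rfl | ⟨k, hk, rfl⟩
    · left
      constructor
      · positivity
      · linarith
    · rcases lt_trichotomy (k : ℤ) m with hkm | hkm | hkm
      · -- k < m : θ ≥ 2P
        right
        have hk1 : (k:ℝ) ≤ (m:ℝ) - 1 := by
          exact_mod_cast (by omega : (k:ℤ) ≤ m - 1)
        have hθ2 : P * 2 ≤ (2:ℝ)^(-(k:ℝ)) := by
          have := mono (-(m:ℝ) + 1) (-(k:ℝ)) (by linarith)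
          rwa [Real.rpow_add h2p, Real.rpow_one] at this
        constructor
        · exact mono _ _ (by linarith)
        · linarith
      · -- k = m : θ = P
        have hθP : (2:ℝ)^(-(k:ℝ)) = P := by
          rw [hP]; congr 1
          rw [← hkm]; push_cast; ring
        rw [hθP]
        rcases le_total w P with hwP | hwP
        · right; constructor <;> linarith
        · left; constructor <;> linarith
      · -- k > m : θ ≤ P/2
        left
        have hk1 : (m:ℝ) + 1 ≤ (k:ℝ) := by
          exact_mod_cast (by omega : m + 1 ≤ (k:ℤ))
        have hθ2 : (2:ℝ)^(-(k:ℝ)) ≤ P / 2 := by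
          have := mono (-(k:ℝ)) (-(m:ℝ) + -1) (by linarith)
          rwa [Real.rpow_add h2p, Real.rpow_neg_one] at this
        constructor
        · linarith
        · linarith
end

section
/- Let C ≥ 0 be an integer and 0 ≤ i ≤ C. For real w with 3·2^{-i-2} < w ≤ 3·2^{-i-1}, the codebook entry 2^{-i} is a minimizer of (w - 2^{-k})^2 over integer k ∈ {0,...,C}, and moreover if 2^{-C} ≤ w < 1 and f = -log₂ w then i = ⌊f + log₂(3/2)⌋ satisfies 3·2^{-i-2} < w ≤ 3·2^{-i-1}. -/
/-- Midpoint/Voronoi characterization in powers-of-two quantization: if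
`3·2^{-i-2} < w ≤ 3·2^{-i-1}` then `2^{-i}` minimizes `(w - 2^{-k})^2` over
`k ∈ {0,…,C}`; moreover if `2^{-C} ≤ w < 1` and `f = -log₂ w` then
`i = ⌊f + log₂(3/2)⌋` satisfies `3·2^{-i-2} < w ≤ 3·2^{-i-1}`. -/
theorem stmt_13 (C : ℕ) (w : ℝ) :
    (∀ i : ℕ, i ≤ C →
      3 * (2 : ℝ) ^ (-(i : ℝ) - 2) < w → w ≤ 3 * (2 : ℝ) ^ (-(i : ℝ) - 1) →
      ∀ k : ℕ, k ≤ C →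
        (w - (2 : ℝ) ^ (-(i : ℝ)))^2 ≤ (w - (2 : ℝ) ^ (-(k : ℝ)))^2) ∧
    ((2 : ℝ) ^ (-(C : ℝ)) ≤ w → w < 1 →
      let f : ℝ := -Real.logb 2 w
      let i : ℤ := ⌊f + Real.logb 2 (3/2)⌋
      3 * (2 : ℝ) ^ (-(i : ℝ) - 2) < w ∧ w ≤ 3 * (2 : ℝ) ^ (-(i : ℝ) - 1)) := by
  have two_pos : (0:ℝ) < 2 := by norm_num
  have h22 : (2:ℝ) ^ (2:ℝ) = 4 := by
    rw [show (2:ℝ) = ((2:ℕ):ℝ) from by norm_num]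
    rw [Real.rpow_natCast]; norm_num
  have h21 : (2:ℝ) ^ (1:ℝ) = 2 := Real.rpow_one 2
  constructor
  · intro i _ h1 h2 k _
    set a := (2:ℝ) ^ (-(i:ℝ)) with ha
    set b := (2:ℝ) ^ (-(k:ℝ)) with hb
    have ha0 : 0 < a := Real.rpow_pos_of_pos two_pos _
    have hb0 : 0 < b := Real.rpow_pos_of_pos two_pos _
    have e4 : (2:ℝ) ^ (-(i:ℝ) - 2) = a / 4 := by
      rw [Real.rpow_sub two_pos, h22]
    have e2 : (2:ℝ) ^ (-(i:ℝ) - 1) = a / 2 := by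
      rw [Real.rpow_sub two_pos, h21]
    rw [e4] at h1
    rw [e2] at h2
    rcases lt_trichotomy k i with hk | hk | hk
    · -- k < i, so b ≥ 2a
      have hkk : (k:ℝ) ≤ (i:ℝ) - 1 := by
        have : (k:ℝ) + 1 ≤ (i:ℝ) := by exact_mod_cast hk
        linarith
      have hble : (2:ℝ) ^ (-(i:ℝ) + 1) ≤ b := by
        apply Real.rpow_le_rpow_left_iff (by norm_num : (1:ℝ) < 2) |>.mpr
        linarith
      have : (2:ℝ) ^ (-(i:ℝ) + 1) = a * 2 := by
        rw [Real.rpow_add two_pos, h21]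
      rw [this] at hble
      nlinarith [mul_nonneg (by linarith : (0:ℝ) ≤ b - a)
        (by linarith : (0:ℝ) ≤ a + b - 2 * w)]
    · subst hk; exact le_rfl
    · -- k > i, so b ≤ a/2
      have hkk : (i:ℝ) + 1 ≤ (k:ℝ) := by exact_mod_cast hk
      have hble : b ≤ (2:ℝ) ^ (-(i:ℝ) - 1) := by
        apply Real.rpow_le_rpow_left_iff (by norm_num : (1:ℝ) < 2) |>.mpr
        linarith
      rw [e2] at hble
      nlinarith [mul_nonneg (by linarith : (0:ℝ) ≤ a - b)
        (by linarith : (0:ℝ) ≤ 2 * w - a - b)]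
  · intro hwC hw1
    intro f i
    have hw0 : 0 < w := lt_of_lt_of_le (Real.rpow_pos_of_pos two_pos _) hwC
    have hx0 : 0 < 3 / (2 * w) := by positivity
    have hfi : f + Real.logb 2 (3/2) = Real.logb 2 (3 / (2 * w)) := by
      have : (3:ℝ) / (2 * w) = (3/2) / w := by ring
      rw [this, Real.logb_div (by norm_num) (ne_of_gt hw0)]
      simp [f]; ring
    set x := Real.logb 2 (3 / (2 * w)) with hxdef
    have hi : i = ⌊x⌋ := by simp [i, hfi]
    have hfl : (i:ℝ) ≤ x := hi ▸ Int.floor_le x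
    have hfu : x < (i:ℝ) + 1 := hi ▸ Int.lt_floor_add_one x
    have hrx : (2:ℝ) ^ x = 3 / (2 * w) := Real.rpow_logb two_pos (by norm_num) hx0
    set A := (2:ℝ) ^ ((i:ℝ)) with hA
    have hA0 : 0 < A := Real.rpow_pos_of_pos two_pos _
    have h1 : A ≤ 3 / (2 * w) := by
      rw [← hrx]
      exact Real.rpow_le_rpow_left_iff (by norm_num : (1:ℝ) < 2) |>.mpr hfl
    have h2 : 3 / (2 * w) < 2 * A := by
      rw [← hrx]
      have : (2:ℝ) ^ ((i:ℝ) + 1) = A * 2 := by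
        rw [Real.rpow_add two_pos, h21]
      calc (2:ℝ) ^ x < (2:ℝ) ^ ((i:ℝ) + 1) :=
            Real.rpow_lt_rpow_left_iff (by norm_num : (1:ℝ) < 2) |>.mpr hfu
        _ = 2 * A := by rw [this]; ring
    have e4 : (2:ℝ) ^ (-(i:ℝ) - 2) = 1 / (4 * A) := by
      rw [Real.rpow_sub two_pos, h22, Real.rpow_neg (le_of_lt two_pos), ← hA]
      field_simp
    have e2 : (2:ℝ) ^ (-(i:ℝ) - 1) = 1 / (2 * A) := by
      rw [Real.rpow_sub two_pos, h21, Real.rpow_neg (le_of_lt two_pos), ← hA]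
      field_simp
    have h1' : A * (2 * w) ≤ 3 := (le_div_iff₀ (by positivity)).mp h1
    have h2' : 3 < 2 * A * (2 * w) := (div_lt_iff₀ (by positivity)).mp h2
    constructor
    · rw [e4]
      rw [show (3:ℝ) * (1 / (4 * A)) = 3 / (4 * A) from by ring,
        div_lt_iff₀ (by positivity)]
      nlinarith
    · rw [e2]
      rw [show (3:ℝ) * (1 / (2 * A)) = 3 / (2 * A) from by ring,
        le_div_iff₀ (by positivity)]
      nlinarith
end
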